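/- In the monoid M presented by ⟨x, y, e | e³ = e, xey = y, xe²y = x, xy = 1⟩, the element e cannot be written as a product p·q where p is left-invertible and q is right-invertible. -/

import Mathlib

/-- The alphabet `A = {x, y, e}`. -/
inductive Alpha : Type
  | x | y | e
  deriving DecidableEq

/-- The defining relations `e³ = e`, `xey = y`, `xe²y = x`, `xy = 1`. -/
def rel : FreeMonoid Alpha → FreeMonoid Alpha → Prop := fun a b =>
  (a = .of .e * .of .e * .of .e ∧ b = .of .e) ∨
  (a = .of .x * .of .e * .of .y ∧ b = .of .y) ∨
  (a = .of .x * .of .e * .of .e * .of .y ∧ b = .of .x) ∨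
  (a = .of .x * .of .y ∧ b = 1)

/-- The monoid `M = ⟨x, y, e | e³ = e, xey = y, xe²y = x, xy = 1⟩`. -/
abbrev M := PresentedMonoid rel

/-- The image of `x` in `M`. -/
def X : M := PresentedMonoid.of rel .x
/-- The image of `y` in `M`. -/
def Y : M := PresentedMonoid.of rel .y
/-- The image of `e` in `M`. -/
def E : M := PresentedMonoid.of rel .e

/-!
Reducing words with the rules `eee → e`, `xy → 1`, `xey → y`, `xeey → x` from the left gives an
action of `M` on the words without a factor `eee`, and the orbit of the empty word is a normal
form: every `m` is the image of the word `m • []`. Two features of the reduction carry the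
argument: a letter `x` is never erased, and neither is a final letter `e`.

If `q q' = 1`, then acting by `q` on `q' • []` gives `[]`; as reducing `y w` or `e w` never gives
the empty word, the normal form of `q` is empty or starts with `x`. In the second case the normal
form `p • q • [] = e • [] = [e]` would contain an `x`. In the first case `p • [] = [e]`, so
`p' • [e] = p' p • [] = []`, erasing the final `e`.
-/

namespace NormalForm

def push : Alpha → List Alpha → List Alpha
  | .x, .y :: t => t
  | .x, .e :: .y :: t => .y :: t
  | .x, .e :: .e :: .y :: t => push .x t
  | .e, .e :: .e :: t => .e :: t
  | a, t => a :: t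

def CubeFree (w : List Alpha) : Prop := ¬ [.e, .e, .e] <:+: w

theorem CubeFree.of_cons {a : Alpha} {t : List Alpha} (h : CubeFree (a :: t)) : CubeFree t :=
  fun h' => h (List.infix_cons h')

theorem cubeFree_push (a : Alpha) {t : List Alpha} (h : CubeFree t) : CubeFree (push a t) := by
  induction a, t using push.induct with
  | case1 t => exact h.of_cons
  | case2 t => exact h.of_cons
  | case3 t ih => rw [push]; exact ih h.of_cons.of_cons.of_cons
  | case4 t => exact h.of_cons
  | case5 a t _ _ _ he =>
    rw [push.eq_5 a t ‹_› ‹_› ‹_› he, CubeFree, List.infix_cons_iff]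
    rintro (hprefix | hinfix)
    · obtain ⟨rfl, hprefix⟩ := List.cons_prefix_cons.1 hprefix
      obtain ⟨s, rfl⟩ : ∃ s, t = .e :: .e :: s := by
        rcases t with _ | ⟨_, _ | ⟨_, s⟩⟩ <;> simp_all
      exact he s rfl rfl
    · exact h hinfix

theorem push_e_cube {t : List Alpha} (h : CubeFree t) :
    push .e (push .e (push .e t)) = push .e t := by
  rcases t with _ | ⟨_ | _ | _, _ | ⟨_ | _ | _, _ | ⟨_ | _ | _, t⟩⟩⟩ <;>
    simp_all [push, CubeFree, List.infix_cons_iff]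

theorem push_xey (t : List Alpha) : push .x (push .e (push .y t)) = push .y t := by
  simp [push]

theorem push_xeey (t : List Alpha) : push .x (push .e (push .e (push .y t))) = push .x t := by
  simp [push]

theorem push_xy (t : List Alpha) : push .x (push .y t) = t := by
  simp [push]

theorem mem_push_of_mem (a : Alpha) {t : List Alpha} (h : .x ∈ t) : .x ∈ push a t := by
  induction a, t using push.induct with
  | case5 a t _ _ _ _ => rw [push.eq_5 a t ‹_› ‹_› ‹_› ‹_›]; exact List.mem_cons_of_mem _ h
  | case3 t ih => simp_all [push]
  | _ => simp_all [push]

theorem suffix_push (a : Alpha) {t : List Alpha} (h : [.e] <:+ t) : [.e] <:+ push a t := by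
  induction a, t using push.induct with
  | case5 a t _ _ _ _ => rw [push.eq_5 a t ‹_› ‹_› ‹_› ‹_›]; exact h.trans (List.suffix_cons a t)
  | case3 t ih => simp_all [push, List.suffix_cons_iff]
  | _ => simp_all [push, List.suffix_cons_iff]

theorem X_mul_Y : X * Y = 1 := PresentedMonoid.mk_eq_mk_of_rel (by simp [rel])
theorem X_mul_E_mul_Y : X * E * Y = Y := PresentedMonoid.mk_eq_mk_of_rel (by simp [rel])
theorem X_mul_E_mul_E_mul_Y : X * E * E * Y = X := PresentedMonoid.mk_eq_mk_of_rel (by simp [rel])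
theorem E_mul_E_mul_E : E * E * E = E := PresentedMonoid.mk_eq_mk_of_rel (by simp [rel])

def CubeFreeWord : Type := {w : List Alpha // CubeFree w}

def pushEnd (a : Alpha) : Function.End CubeFreeWord := fun w => ⟨push a w.1, cubeFree_push a w.2⟩

theorem pushEnd_rel (u v : FreeMonoid Alpha) (h : rel u v) :
    FreeMonoid.lift pushEnd u = FreeMonoid.lift pushEnd v := by
  rcases h with ⟨rfl, rfl⟩ | ⟨rfl, rfl⟩ | ⟨rfl, rfl⟩ | ⟨rfl, rfl⟩ <;>
    refine funext fun w => Subtype.ext ?_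
  · exact push_e_cube w.2
  · exact push_xey w.1
  · exact push_xeey w.1
  · exact push_xy w.1

instance : MulAction M CubeFreeWord :=
  MulAction.compHom _ (PresentedMonoid.lift pushEnd pushEnd_rel)

def nil : CubeFreeWord := ⟨[], by simp [CubeFree]⟩

theorem of_smul_val (a : Alpha) (w : CubeFreeWord) :
    (PresentedMonoid.of rel a • w).1 = push a w.1 := rfl

def ofWord (w : List Alpha) : M := PresentedMonoid.mk rel (FreeMonoid.ofList w)

theorem ofWord_cons (a : Alpha) (t : List Alpha) :
    ofWord (a :: t) = PresentedMonoid.of rel a * ofWord t := rfl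

theorem ofWord_push (a : Alpha) (t : List Alpha) :
    ofWord (push a t) = PresentedMonoid.of rel a * ofWord t := by
  induction a, t using push.induct with
  | case1 t =>
    show ofWord t = X * (Y * ofWord t)
    rw [← mul_assoc, X_mul_Y, one_mul]
  | case2 t =>
    show Y * ofWord t = X * (E * (Y * ofWord t))
    simp only [← mul_assoc, X_mul_E_mul_Y]
  | case3 t ih =>
    rw [push, ih]
    show X * ofWord t = X * (E * (E * (Y * ofWord t)))
    simp only [← mul_assoc, X_mul_E_mul_E_mul_Y]
  | case4 t =>
    show E * ofWord t = E * (E * (E * ofWord t))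
    simp only [← mul_assoc, E_mul_E_mul_E]
  | case5 a t _ _ _ _ => rw [push.eq_5 a t ‹_› ‹_› ‹_› ‹_›, ofWord_cons]

theorem ofWord_smul (m : M) (w : CubeFreeWord) : ofWord (m • w).1 = m * ofWord w.1 := by
  induction m using PresentedMonoid.inductionOn with | _ u
  induction u using FreeMonoid.inductionOn' with
  | one => rw [map_one, one_smul, one_mul]
  | of_mul a u ih =>
    rw [map_mul, mul_smul, mul_assoc, ← ih]
    exact ofWord_push a _

theorem ofWord_smul_nil (m : M) : ofWord (m • nil).1 = m := by
  rw [ofWord_smul, nil]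
  exact mul_one m

theorem ofWord_smul_val (w : List Alpha) (s : CubeFreeWord) :
    (ofWord w • s).1 = w.foldr push s.1 := by
  induction w with
  | nil => rw [show ofWord [] = 1 from rfl, one_smul, List.foldr_nil]
  | cons a w ih => rw [ofWord_cons, mul_smul, of_smul_val, ih, List.foldr_cons]

theorem smul_val_of_forall_push {P : List Alpha → Prop} (hP : ∀ a t, P t → P (push a t)) (m : M)
    {s : CubeFreeWord} (hs : P s.1) : P (m • s).1 := by
  rw [← ofWord_smul_nil m, ofWord_smul_val]
  induction (m • nil).1 with
  | nil => exact hs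
  | cons a w ih => exact hP a _ ih

theorem eq_x_of_push_eq_nil {a : Alpha} {t : List Alpha} (h : push a t = []) : a = .x := by
  induction a, t using push.induct with
  | case5 a t _ _ _ _ => rw [push.eq_5 a t ‹_› ‹_› ‹_› ‹_›] at h; cases h
  | case4 t => cases h
  | _ => rfl

theorem eq_nil_or_eq_x_cons_of_foldr_push_eq_nil {w t : List Alpha} (h : w.foldr push t = []) :
    w = [] ∨ ∃ w', w = .x :: w' := by
  rcases w with _ | ⟨a, w'⟩
  · exact .inl rfl
  · exact .inr ⟨w', by rw [eq_x_of_push_eq_nil h]⟩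

end NormalForm

open NormalForm in
/-- In `M`, the element `e` is not a product of a left-invertible element by a
right-invertible element. -/
theorem stmt_4 :
    ¬ ∃ p q : M, (∃ p' : M, p' * p = 1) ∧ (∃ q' : M, q * q' = 1) ∧ p * q = E := by
  rintro ⟨p, q, ⟨p', hp⟩, ⟨q', hq⟩, hpq⟩
  have hpq_nil : (p • q • nil).1 = [.e] := by rw [← mul_smul, hpq]; rfl
  obtain hq_nil | ⟨w, hw⟩ : (q • nil).1 = [] ∨ ∃ w, (q • nil).1 = .x :: w := by
    apply eq_nil_or_eq_x_cons_of_foldr_push_eq_nil (t := (q' • nil).1)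
    rw [← ofWord_smul_val, ofWord_smul_nil, ← mul_smul, hq, one_smul]
    rfl
  · have hsuffix : [.e] <:+ (p' • p • q • nil).1 :=
      smul_val_of_forall_push (fun a _ => suffix_push a) p' (hpq_nil ▸ List.suffix_refl _)
    rw [← mul_smul, hp, one_smul, hq_nil] at hsuffix
    simp at hsuffix
  · have hx : .x ∈ (p • q • nil).1 :=
      smul_val_of_forall_push (fun a _ => mem_push_of_mem a) p
        (by rw [hw]; exact List.mem_cons_self)
    simp [hpq_nil] at hx
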